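/- There exist a finite nonempty set A, a function F : Δ(A) → Δ(A) differentiable at every point of Δ(A), a policy π₀ ∈ Δ(A), a real ρ > 0 with ρ ∈ ℕ, and τ : A → Δ(A) such that for every a ∈ A, F(π₀ + ε(a − π₀)) = F(π₀) + ε ρ (τ(a) − F(π₀)) + o(ε) as ε → 0⁺, and yet there is no probability distribution ν on ℕ with mean Σ_m m·ν(m) ≤ ρ together with functions g_m : A^m → Δ(A) (for each m with ν(m) > 0) satisfying, for every π₀' ∈ Δ(A), F(π₀ + ε(π₀' − π₀)) = Σ_m ν(m) E[g_m(A_1,…,A_m) | A_1,…,A_m i.i.d. π₀ + ε(π₀' − π₀)] + o(ε) as ε → 0⁺. (One such example is A = {0,1}, F determined by F(1|p) = 16p⁴/(1+16p⁴) where p = π(1), π₀ the uniform distribution, and ρ = 2.) -/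

import Mathlib

/-!
Take `A = Bool` and identify a distribution with its probability `p` of `true`. The cubic
`c(p) = 1/2 + 2 (p - 1/2) - 5 (p - 1/2)^3` maps `[0,1]` into itself and has `c'(1/2) = 2`, so
`F(p) = c(p)` has the GGT expansion at the uniform policy with `ρ = 2` and `τ(a) = a`.

A scheme drawing `N ∼ ν` samples outputs `true` with probability `Q(x) = ∑ ν_m E_m(x)`, where
`E_m(x) = E[g_m(X)(true)]` for `X_k` i.i.d. Bernoulli(`x`); approximating `F` to first order forces
`Q'(1/2) = c'(1/2) = 2`. But `E_m'(1/2) = 2^(1-m) ∑_v T(v) g_m(v)(true)` with `T(v)` the number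
of `true` minus the number of `false` entries of `v`, and since `∑ T = 0` and `∑ T^2 = m 2^m`
this is at most `(m + 1)/2` in absolute value. As `E_m` is `m`-Lipschitz and `E[N] < ∞`,
dominated convergence lets us differentiate term by term, so `Q'(1/2) ≤ (E[N] + 1)/2 ≤ 3/2`.
-/

open Filter Asymptotics Topology

/-- `π` is a probability distribution on the finite set `A`. -/
def IsDist {A : Type} [Fintype A] (π : A → ℝ) : Prop :=
  (∀ a, 0 ≤ π a) ∧ ∑ a, π a = 1

/-- The point mass at `a`. -/
def unitMass {A : Type} [DecidableEq A] (a : A) : A → ℝ :=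
  fun a' => if a' = a then 1 else 0

/-- The distribution `E[g(A_1,…,A_N)]` for `A_1,…,A_N` i.i.d. with law `μ`. -/
noncomputable def sampleExp {A : Type} [Fintype A] (N : ℕ)
    (g : (Fin N → A) → A → ℝ) (μ : A → ℝ) : A → ℝ :=
  ∑ v : Fin N → A, (∏ k, μ (v k)) • g v

/-- The body of Statement 13, for a given finite action set `A`: there are a dependence
function `F : Δ(A) → Δ(A)` differentiable everywhere on `Δ(A)`, a policy `π₀ ∈ Δ(A)`, a
natural GGT weight `ρ > 0` and a transformation function `τ : A → Δ(A)` satisfying the GGT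
expansion at `π₀`, such that no (possibly random) number of samples `N ∼ ν` with mean
`E[N] ≤ ρ`, together with functions `g_m : A^m → Δ(A)`, locally approximates `F` at `π₀`. -/
def Stmt13Body (A : Type) [Fintype A] [DecidableEq A] : Prop :=
  ∃ (F : (A → ℝ) → A → ℝ) (π₀ : A → ℝ) (ρ : ℝ) (τ : A → A → ℝ),
    (∀ π, IsDist π → IsDist (F π)) ∧ IsDist π₀ ∧
    0 < ρ ∧ (∃ m : ℕ, (m : ℝ) = ρ) ∧ (∀ a, IsDist (τ a)) ∧
    (∀ π : A → ℝ, IsDist π → ∃ Dv : A → A → ℝ, ∀ π' : A → ℝ, IsDist π' →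
      (fun ε : ℝ => F (π + ε • (π' - π)) - F π - ε • ∑ a, π' a • Dv a)
        =o[𝓝[>] (0:ℝ)] fun ε => ε) ∧
    (∀ a : A,
      (fun ε : ℝ => F (π₀ + ε • (unitMass a - π₀)) - F π₀ - ε • (ρ • (τ a - F π₀)))
        =o[𝓝[>] (0:ℝ)] fun ε => ε) ∧
    ¬ ∃ ν : ℕ → ℝ,
        (∀ m, 0 ≤ ν m) ∧ (∑' m : ℕ, ν m) = 1 ∧
        Summable (fun m : ℕ => ν m * m) ∧ (∑' m : ℕ, ν m * m) ≤ ρ ∧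
        ∃ g : (m : ℕ) → (Fin m → A) → A → ℝ,
          (∀ m v, ν m ≠ 0 → IsDist (g m v)) ∧
          ∀ π' : A → ℝ, IsDist π' →
            (fun ε : ℝ => F (π₀ + ε • (π' - π₀))
                - ∑' m : ℕ, ν m • sampleExp m (g m) (π₀ + ε • (π' - π₀)))
              =o[𝓝[>] (0:ℝ)] fun ε => ε

open Set

theorem IsDist.mem_Icc {A : Type} [Fintype A] {π : A → ℝ} (h : IsDist π) (a : A) :
    π a ∈ Icc 0 1 :=
  ⟨h.1 a, h.2 ▸ Finset.single_le_sum (fun b _ => h.1 b) (Finset.mem_univ a)⟩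

theorem isDist_unitMass {A : Type} [Fintype A] [DecidableEq A] (a : A) : IsDist (unitMass a) :=
  ⟨fun b => by unfold unitMass; split_ifs <;> norm_num, by simp [unitMass]⟩

theorem sum_fin_cons {α M : Type*} [Fintype α] [AddCommMonoid M] (m : ℕ)
    (G : (Fin (m + 1) → α) → M) : ∑ v, G v = ∑ a, ∑ w : Fin m → α, G (Fin.cons a w) := by
  rw [← (Fin.consEquiv fun _ => α).sum_comp, Fintype.sum_prod_type]
  rfl

section SampleExp

variable {A : Type} [Fintype A]

theorem sampleExp_apply (N : ℕ) (g : (Fin N → A) → A → ℝ) (μ : A → ℝ) (a : A) :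
    sampleExp N g μ a = ∑ v, (∏ k, μ (v k)) * g v a := by
  simp [sampleExp, Finset.sum_apply]

theorem sampleExp_zero (g : (Fin 0 → A) → A → ℝ) (μ : A → ℝ) :
    sampleExp 0 g μ = g Fin.elim0 := by
  rw [sampleExp, Fintype.sum_unique]
  simp [Subsingleton.elim default Fin.elim0]

theorem sampleExp_succ (N : ℕ) (g : (Fin (N + 1) → A) → A → ℝ) (μ : A → ℝ) :
    sampleExp (N + 1) g μ = ∑ a, μ a • sampleExp N (fun w => g (Fin.cons a w)) μ := by
  simp only [sampleExp, sum_fin_cons, Finset.smul_sum, smul_smul, Fin.prod_univ_succ,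
    Fin.cons_zero, Fin.cons_succ]

theorem IsDist.sampleExp {N : ℕ} {g : (Fin N → A) → A → ℝ} {μ : A → ℝ} (hμ : IsDist μ)
    (hg : ∀ v, IsDist (g v)) : IsDist (sampleExp N g μ) := by
  refine ⟨fun a => ?_, ?_⟩
  · rw [sampleExp_apply]
    exact Finset.sum_nonneg fun v _ =>
      mul_nonneg (Finset.prod_nonneg fun k _ => hμ.1 _) ((hg v).1 a)
  · simp_rw [sampleExp_apply]
    rw [Finset.sum_comm]
    simp_rw [← Finset.mul_sum, (hg _).2, mul_one, ← Fintype.sum_pow, hμ.2, one_pow]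

theorem summable_smul_sampleExp {ν : ℕ → ℝ} (hν : Summable ν) (hν0 : ∀ m, 0 ≤ ν m)
    {g : (m : ℕ) → (Fin m → A) → A → ℝ} (hg : ∀ m v, IsDist (g m v)) {μ : A → ℝ}
    (hμ : IsDist μ) : Summable fun m => ν m • sampleExp m (g m) μ :=
  Pi.summable.2 fun a => hν.of_nonneg_of_le
    (fun m => mul_nonneg (hν0 m) ((hμ.sampleExp (hg m)).1 a))
    (fun m => mul_le_of_le_one_right (hν0 m) ((hμ.sampleExp (hg m)).mem_Icc a).2)

end SampleExp

section Bernoulli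

def boolSign (b : Bool) : ℝ := if b then 1 else -1

def bernoulliDist (x : ℝ) : Bool → ℝ := fun b => if b then x else 1 - x

theorem bernoulliDist_eq_add_smul (x : ℝ) :
    bernoulliDist x = bernoulliDist 0 + x • boolSign := by
  funext b
  cases b <;> simp [bernoulliDist, boolSign]
  ring

theorem isDist_bernoulliDist {x : ℝ} (hx : x ∈ Icc 0 1) : IsDist (bernoulliDist x) :=
  ⟨fun b => by cases b <;> simp [bernoulliDist, hx.1, hx.2], by simp [bernoulliDist]⟩

noncomputable def sampleProbTrue (m : ℕ) (g : (Fin m → Bool) → Bool → ℝ) (x : ℝ) : ℝ :=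
  sampleExp m g (bernoulliDist x) true

variable {m : ℕ} {g : (Fin m → Bool) → Bool → ℝ}

theorem sampleProbTrue_zero (g : (Fin 0 → Bool) → Bool → ℝ) (x : ℝ) :
    sampleProbTrue 0 g x = g Fin.elim0 true := by
  rw [sampleProbTrue, sampleExp_zero]

theorem sampleProbTrue_succ (g : (Fin (m + 1) → Bool) → Bool → ℝ) (x : ℝ) :
    sampleProbTrue (m + 1) g x = x * sampleProbTrue m (fun w => g (Fin.cons true w)) x
      + (1 - x) * sampleProbTrue m (fun w => g (Fin.cons false w)) x := by
  simp [sampleProbTrue, sampleExp_succ, bernoulliDist, add_comm]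

theorem sampleProbTrue_half (g : (Fin m → Bool) → Bool → ℝ) :
    sampleProbTrue m g (1 / 2) = (1 / 2) ^ m * ∑ v, g v true := by
  have h : ∀ b, bernoulliDist (1 / 2) b = 1 / 2 := fun b => by
    cases b <;> norm_num [bernoulliDist]
  simp only [sampleProbTrue, sampleExp_apply, h, Finset.prod_const, Finset.card_univ,
    Fintype.card_fin, Finset.mul_sum]

theorem sampleProbTrue_mem_Icc (hg : ∀ v, IsDist (g v)) {x : ℝ} (hx : x ∈ Icc 0 1) :
    sampleProbTrue m g x ∈ Icc 0 1 :=
  ((isDist_bernoulliDist hx).sampleExp hg).mem_Icc true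

theorem abs_sampleProbTrue_sub_le (hg : ∀ v, IsDist (g v)) {x y : ℝ} (hx : x ∈ Icc 0 1)
    (hy : y ∈ Icc 0 1) : |sampleProbTrue m g x - sampleProbTrue m g y| ≤ m * |x - y| := by
  induction m with
  | zero => simp [sampleProbTrue_zero]
  | succ m ih =>
    simp only [sampleProbTrue_succ]
    set g₁ := fun w => g (Fin.cons true w)
    set g₀ := fun w => g (Fin.cons false w)
    have h₁ := ih (g := g₁) (fun w => hg _)
    have h₀ := ih (g := g₀) (fun w => hg _)
    have hy₁ := sampleProbTrue_mem_Icc (g := g₁) (fun w => hg _) hy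
    have hy₀ := sampleProbTrue_mem_Icc (g := g₀) (fun w => hg _) hy
    have hA : |x * (sampleProbTrue m g₁ x - sampleProbTrue m g₁ y)| ≤ x * (m * |x - y|) := by
      rw [abs_mul, abs_of_nonneg hx.1]
      exact mul_le_mul_of_nonneg_left h₁ hx.1
    have hB : |(1 - x) * (sampleProbTrue m g₀ x - sampleProbTrue m g₀ y)|
        ≤ (1 - x) * (m * |x - y|) := by
      rw [abs_mul, abs_of_nonneg (sub_nonneg.2 hx.2)]
      exact mul_le_mul_of_nonneg_left h₀ (sub_nonneg.2 hx.2)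
    have hC : |(x - y) * (sampleProbTrue m g₁ y - sampleProbTrue m g₀ y)| ≤ |x - y| := by
      rw [abs_mul]
      exact mul_le_of_le_one_right (abs_nonneg _)
        (abs_sub_le_iff.2 ⟨by linarith [hy₁.2, hy₀.1], by linarith [hy₁.1, hy₀.2]⟩)
    calc _ = |x * (sampleProbTrue m g₁ x - sampleProbTrue m g₁ y)
            + (1 - x) * (sampleProbTrue m g₀ x - sampleProbTrue m g₀ y)
            + (x - y) * (sampleProbTrue m g₁ y - sampleProbTrue m g₀ y)| := by ring_nf
      _ ≤ x * (m * |x - y|) + (1 - x) * (m * |x - y|) + |x - y| :=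
          (abs_add_le _ _).trans (add_le_add ((abs_add_le _ _).trans (add_le_add hA hB)) hC)
      _ = ((m + 1 : ℕ) : ℝ) * |x - y| := by push_cast; ring

end Bernoulli

def signedCount {m : ℕ} (v : Fin m → Bool) : ℝ := ∑ k, boolSign (v k)

theorem signedCount_cons {m : ℕ} (b : Bool) (w : Fin m → Bool) :
    signedCount (Fin.cons b w : Fin (m + 1) → Bool) = boolSign b + signedCount w := by
  simp [signedCount, Fin.sum_univ_succ]

theorem sum_signedCount (m : ℕ) : ∑ v : Fin m → Bool, signedCount v = 0 := by
  induction m with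
  | zero => simp [signedCount]
  | succ m ih =>
    simp [sum_fin_cons, signedCount_cons, Finset.sum_add_distrib, ih, boolSign]

theorem sum_signedCount_sq (m : ℕ) : ∑ v : Fin m → Bool, signedCount v ^ 2 = 2 ^ m * m := by
  induction m with
  | zero => simp [signedCount]
  | succ m ih =>
    simp only [sum_fin_cons, signedCount_cons, Fintype.sum_bool, boolSign, if_true,
      Bool.false_eq_true, if_false, ← Finset.sum_add_distrib]
    calc ∑ w : Fin m → Bool, ((1 + signedCount w) ^ 2 + (-1 + signedCount w) ^ 2)
        = ∑ w : Fin m → Bool, (2 * signedCount w ^ 2 + 2) :=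
          Finset.sum_congr rfl fun w _ => by ring
      _ = 2 ^ (m + 1) * ((m + 1 : ℕ) : ℝ) := by
          rw [Finset.sum_add_distrib, ← Finset.mul_sum, ih]
          simp
          ring

theorem hasDerivAt_sampleProbTrue_half (m : ℕ) (g : (Fin m → Bool) → Bool → ℝ) :
    HasDerivAt (sampleProbTrue m g) (2 * (1 / 2) ^ m * ∑ v, signedCount v * g v true) (1 / 2) := by
  induction m with
  | zero =>
    rw [show sampleProbTrue 0 g = fun _ => g Fin.elim0 true from funext (sampleProbTrue_zero g)]
    simpa [signedCount] using hasDerivAt_const (1 / 2 : ℝ) (g Fin.elim0 true)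
  | succ m ih =>
    set g₁ := fun w => g (Fin.cons true w)
    set g₀ := fun w => g (Fin.cons false w)
    have h : HasDerivAt (fun x => x * sampleProbTrue m g₁ x + (1 - x) * sampleProbTrue m g₀ x) _
        (1 / 2) := ((hasDerivAt_id' _).mul (ih g₁)).add
      (((hasDerivAt_const _ 1).sub (hasDerivAt_id' _)).mul (ih g₀))
    rw [show sampleProbTrue (m + 1) g = _ from funext (sampleProbTrue_succ g)]
    refine h.congr_deriv ?_
    simp only [sum_fin_cons, Fintype.sum_bool, signedCount_cons, boolSign, if_true,
      Bool.false_eq_true, if_false, add_mul, neg_mul, one_mul, Finset.sum_add_distrib,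
      Finset.sum_neg_distrib, sampleProbTrue_half]
    ring

theorem abs_sum_signedCount_mul_le {m : ℕ} {h : (Fin m → Bool) → ℝ} (hh : ∀ v, h v ∈ Icc 0 1) :
    |∑ v, signedCount v * h v| ≤ 2 ^ m * (m + 1) / 4 := by
  have hcentre : ∑ v, signedCount v * h v = ∑ v, signedCount v * (h v - 1 / 2) := by
    simp only [mul_sub, Finset.sum_sub_distrib, ← Finset.sum_mul, sum_signedCount, zero_mul,
      sub_zero]
  calc |∑ v, signedCount v * h v| ≤ ∑ v, |signedCount v * (h v - 1 / 2)| :=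
        hcentre ▸ Finset.abs_sum_le_sum_abs _ _
    _ ≤ ∑ v : Fin m → Bool, (signedCount v ^ 2 + 1) / 4 := by
        refine Finset.sum_le_sum fun v _ => ?_
        have hc : |h v - 1 / 2| ≤ 1 / 2 := abs_le.2 ⟨by linarith [(hh v).1], by linarith [(hh v).2]⟩
        rw [abs_mul]
        nlinarith [mul_le_mul_of_nonneg_left hc (abs_nonneg (signedCount v)),
          sq_nonneg (|signedCount v| - 1), sq_abs (signedCount v)]
    _ = 2 ^ m * (m + 1) / 4 := by
        rw [← Finset.sum_div, Finset.sum_add_distrib, sum_signedCount_sq]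
        simp
        ring

theorem exists_hasDerivAt_sampleProbTrue_half {m : ℕ} {g : (Fin m → Bool) → Bool → ℝ}
    (hg : ∀ v, IsDist (g v)) :
    ∃ d, HasDerivAt (sampleProbTrue m g) d (1 / 2) ∧ |d| ≤ (m + 1) / 2 := by
  refine ⟨_, hasDerivAt_sampleProbTrue_half m g, ?_⟩
  have hpow : (2 : ℝ) * (1 / 2) ^ m * 2 ^ m = 2 := by rw [mul_assoc, ← mul_pow]; norm_num
  calc |2 * (1 / 2) ^ m * ∑ v, signedCount v * g v true|
      = 2 * (1 / 2) ^ m * |∑ v, signedCount v * g v true| := by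
        rw [abs_mul, abs_of_pos (by positivity)]
    _ ≤ 2 * (1 / 2) ^ m * (2 ^ m * (m + 1) / 4) :=
        mul_le_mul_of_nonneg_left (abs_sum_signedCount_mul_le fun v => (hg v).mem_Icc true)
          (by positivity)
    _ = (m + 1) / 2 := by linear_combination (↑m + 1) / 4 * hpow

section Calculus

theorem hasDerivAt_tsum_of_abs_sub_le {ι : Type*} {E : ι → ℝ → ℝ} {d L : ι → ℝ} {s : Set ℝ}
    {x₀ : ℝ} (hs : s ∈ 𝓝 x₀) (hL : Summable L) (hE : ∀ x ∈ s, Summable fun i => E i x)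
    (hlip : ∀ i, ∀ x ∈ s, |E i x - E i x₀| ≤ L i * |x - x₀|)
    (hd : ∀ i, HasDerivAt (E i) (d i) x₀) :
    HasDerivAt (fun x => ∑' i, E i x) (∑' i, d i) x₀ := by
  rw [hasDerivAt_iff_tendsto_slope]
  have hslope : ∀ x ∈ s, ∑' i, slope (E i) x₀ x = slope (fun x => ∑' i, E i x) x₀ x := by
    intro x hx
    simp only [slope_def_field]
    rw [tsum_div_const, (hE x hx).tsum_sub (hE x₀ (mem_of_mem_nhds hs))]
  refine (tendsto_tsum_of_dominated_convergence hL
    (fun i => hasDerivAt_iff_tendsto_slope.1 (hd i)) ?_).congr' ?_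
  · filter_upwards [nhdsWithin_le_nhds hs, self_mem_nhdsWithin] with x hx hne i
    rw [slope_def_field, Real.norm_eq_abs, abs_div,
      div_le_iff₀ (abs_pos.2 (sub_ne_zero.2 hne))]
    exact hlip i x hx
  · filter_upwards [nhdsWithin_le_nhds hs] with x hx
    exact hslope x hx

variable {E : Type*} [NormedAddCommGroup E] [NormedSpace ℝ E] {f : ℝ → E} {f' : E}

theorem HasDerivAt.isLittleO_nhdsGT (h : HasDerivAt f f' 0) :
    (fun ε => f ε - f 0 - ε • f') =o[𝓝[>] (0 : ℝ)] fun ε => ε := by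
  simpa using h.isLittleO.mono nhdsWithin_le_nhds

theorem HasDerivAt.eq_zero_of_isLittleO_nhdsGT (hf : HasDerivAt f f' 0)
    (ho : f =o[𝓝[>] (0 : ℝ)] fun ε => ε) : f' = 0 := by
  have hf0 : f 0 = 0 := tendsto_nhds_unique
    (hf.continuousAt.tendsto.mono_left nhdsWithin_le_nhds)
    (ho.trans_tendsto (tendsto_id.mono_left nhdsWithin_le_nhds))
  have h0 : HasDerivWithinAt f 0 (Ioi 0) 0 := by
    rw [hasDerivWithinAt_iff_isLittleO]
    simpa [hf0] using ho
  exact (uniqueDiffWithinAt_Ioi 0).eq_deriv _ hf.hasDerivWithinAt h0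

end Calculus

noncomputable def cubic (p : ℝ) : ℝ := 1 / 2 + 2 * (p - 1 / 2) - 5 * (p - 1 / 2) ^ 3

noncomputable def cubicMap (π : Bool → ℝ) : Bool → ℝ := bernoulliDist (cubic (π true))

theorem cubic_mem_Icc {p : ℝ} (hp : p ∈ Icc 0 1) : cubic p ∈ Icc 0 1 := by
  obtain ⟨h0, h1⟩ := hp
  unfold cubic
  -- `cubic` comes closest to `0` and `1` at its critical points `1/2 ± √(2/15) ≈ 0.135, 0.865`.
  constructor <;> nlinarith [sq_nonneg (p - 0.865), sq_nonneg (p - 0.135),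
    mul_nonneg h0 (sub_nonneg.mpr h1)]

theorem hasDerivAt_cubic (p : ℝ) : HasDerivAt cubic (2 - 15 * (p - 1 / 2) ^ 2) p := by
  have hq : HasDerivAt (fun x : ℝ => x - 1 / 2) 1 p := (hasDerivAt_id' p).sub_const _
  have h := ((hq.const_mul 2).sub ((hq.pow 3).const_mul 5)).const_add (1 / 2)
  rw [show cubic = fun x => 1 / 2 + (2 * (x - 1 / 2) - 5 * (x - 1 / 2) ^ 3) from
    funext fun x => by unfold cubic; ring]
  exact h.congr_deriv (by norm_num; ring)

theorem isDist_cubicMap {π : Bool → ℝ} (hπ : IsDist π) : IsDist (cubicMap π) :=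
  isDist_bernoulliDist (cubic_mem_Icc (hπ.mem_Icc true))

theorem hasDerivAt_cubicMap_segment (π π' : Bool → ℝ) :
    HasDerivAt (fun ε : ℝ => cubicMap (π + ε • (π' - π)))
      (((2 - 15 * (π true - 1 / 2) ^ 2) * (π' true - π true)) • boolSign) 0 := by
  have hline : HasDerivAt (fun ε : ℝ => π true + ε * (π' true - π true)) (π' true - π true) 0 := by
    simpa using (hasDerivAt_mul_const (π' true - π true)).const_add (π true)
  have h := ((hasDerivAt_cubic (π true)).comp_of_eq 0 hline (by simp)).smul_const boolSign
  refine (h.const_add (bernoulliDist 0)).congr_of_eventuallyEq (.of_forall fun ε => ?_)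
  simp [cubicMap, bernoulliDist_eq_add_smul (cubic _)]

theorem exists_isLittleO_cubicMap_segment (π : Bool → ℝ) :
    ∃ Dv : Bool → Bool → ℝ, ∀ π' : Bool → ℝ, IsDist π' →
      (fun ε : ℝ => cubicMap (π + ε • (π' - π)) - cubicMap π - ε • ∑ a, π' a • Dv a)
        =o[𝓝[>] (0 : ℝ)] fun ε => ε := by
  refine ⟨fun a => ((2 - 15 * (π true - 1 / 2) ^ 2) * (unitMass a true - π true)) • boolSign,
    fun π' hπ' => ?_⟩
  have h1 := hπ'.2
  rw [Fintype.sum_bool] at h1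
  have hsum : ∑ a, π' a • ((2 - 15 * (π true - 1 / 2) ^ 2) * (unitMass a true - π true)) • boolSign
      = ((2 - 15 * (π true - 1 / 2) ^ 2) * (π' true - π true)) • boolSign := by
    simp only [Fintype.sum_bool, unitMass, if_true, Bool.true_eq_false, if_false, smul_smul,
      ← add_smul]
    congr 1
    linear_combination -(2 - 15 * (π true - 1 / 2) ^ 2) * π true * h1
  refine (hasDerivAt_cubicMap_segment π π').isLittleO_nhdsGT.congr_left fun ε => ?_
  rw [zero_smul, add_zero, hsum]

theorem isLittleO_cubicMap_toward_unitMass (a : Bool) :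
    (fun ε : ℝ => cubicMap (bernoulliDist (1 / 2) + ε • (unitMass a - bernoulliDist (1 / 2)))
        - cubicMap (bernoulliDist (1 / 2))
        - ε • ((2 : ℝ) • (unitMass a - cubicMap (bernoulliDist (1 / 2)))))
      =o[𝓝[>] (0 : ℝ)] fun ε => ε := by
  refine (hasDerivAt_cubicMap_segment (bernoulliDist (1 / 2)) (unitMass a)).isLittleO_nhdsGT
    |>.congr_left fun ε => ?_
  rw [zero_smul, add_zero]
  congr 2
  funext b
  cases a <;> cases b <;> norm_num [cubicMap, cubic, bernoulliDist, unitMass, boolSign]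

theorem exists_isDist_smul_sampleExp_eq {A : Type} [Fintype A] {ν : ℕ → ℝ}
    {g : (m : ℕ) → (Fin m → A) → A → ℝ} (hg : ∀ m v, ν m ≠ 0 → IsDist (g m v)) {π₀ : A → ℝ}
    (hπ₀ : IsDist π₀) :
    ∃ g' : (m : ℕ) → (Fin m → A) → A → ℝ, (∀ m v, IsDist (g' m v)) ∧
      ∀ m μ, ν m • sampleExp m (g' m) μ = ν m • sampleExp m (g m) μ := by
  classical
  refine ⟨fun m => if ν m = 0 then fun _ => π₀ else g m, fun m v => ?_, fun m μ => ?_⟩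
  · by_cases h : ν m = 0 <;> simp [h, hπ₀, hg m v]
  · by_cases h : ν m = 0 <;> simp [h]

theorem exists_hasDerivAt_tsum_sampleProbTrue_half {ν : ℕ → ℝ} (hν0 : ∀ m, 0 ≤ ν m)
    (hν : Summable ν) (hνm : Summable fun m : ℕ => ν m * m)
    {g : (m : ℕ) → (Fin m → Bool) → Bool → ℝ} (hg : ∀ m v, IsDist (g m v)) :
    ∃ D, HasDerivAt (fun x => ∑' m, ν m * sampleProbTrue m (g m) x) D (1 / 2) ∧
      D ≤ (∑' m : ℕ, ν m * m + ∑' m, ν m) / 2 := by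
  choose d hd hdle using fun m => exists_hasDerivAt_sampleProbTrue_half (hg m)
  have hIcc : Icc (0 : ℝ) 1 ∈ 𝓝 (1 / 2) := Icc_mem_nhds (by norm_num) (by norm_num)
  refine ⟨_, hasDerivAt_tsum_of_abs_sub_le hIcc hνm (fun x hx => ?_) (fun m x hx => ?_)
    (fun m => (hd m).const_mul (ν m)), ?_⟩
  · exact hν.of_nonneg_of_le (fun m => mul_nonneg (hν0 m) (sampleProbTrue_mem_Icc (hg m) hx).1)
      (fun m => mul_le_of_le_one_right (hν0 m) (sampleProbTrue_mem_Icc (hg m) hx).2)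
  · rw [← mul_sub, abs_mul, abs_of_nonneg (hν0 m), mul_assoc]
    exact mul_le_mul_of_nonneg_left (abs_sampleProbTrue_sub_le (hg m) hx (by norm_num)) (hν0 m)
  · have hdle' : ∀ m, ‖ν m * d m‖ ≤ (ν m * m + ν m) / 2 := fun m => by
      rw [Real.norm_eq_abs, abs_mul, abs_of_nonneg (hν0 m)]
      linarith [mul_le_mul_of_nonneg_left (hdle m) (hν0 m)]
    have hsum : Summable fun m : ℕ => (ν m * m + ν m) / 2 := (hνm.add hν).div_const 2
    have hle := (hsum.of_norm_bounded hdle').tsum_le_tsum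
      (fun m => (le_abs_self _).trans (hdle' m)) hsum
    rwa [tsum_div_const, hνm.tsum_add hν] at hle

theorem not_isLittleO_cubicMap_sub_scheme {ν : ℕ → ℝ} (hν0 : ∀ m, 0 ≤ ν m)
    (hν1 : ∑' m, ν m = 1) (hνm : Summable fun m : ℕ => ν m * m) (hmean : ∑' m : ℕ, ν m * m ≤ 2)
    {g : (m : ℕ) → (Fin m → Bool) → Bool → ℝ} (hg : ∀ m v, IsDist (g m v)) :
    ¬ (fun ε : ℝ => cubicMap (bernoulliDist (1 / 2) + ε • (unitMass true - bernoulliDist (1 / 2)))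
        - ∑' m : ℕ, ν m • sampleExp m (g m)
            (bernoulliDist (1 / 2) + ε • (unitMass true - bernoulliDist (1 / 2))))
      =o[𝓝[>] (0 : ℝ)] fun ε => ε := by
  intro ho
  have hν : Summable ν := by
    by_contra h
    simp [tsum_eq_zero_of_not_summable h] at hν1
  obtain ⟨D, hQ, hD⟩ := exists_hasDerivAt_tsum_sampleProbTrue_half hν0 hν hνm hg
  set Q : ℝ → ℝ := fun x => ∑' m, ν m * sampleProbTrue m (g m) x
  have hline : HasDerivAt (fun ε : ℝ => 1 / 2 + ε / 2) (1 / 2) 0 := by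
    simpa using ((hasDerivAt_id' (0 : ℝ)).div_const 2).const_add (1 / 2)
  have hdiff : HasDerivAt (fun ε => cubic (1 / 2 + ε / 2) - Q (1 / 2 + ε / 2)) (1 - D / 2) 0 := by
    refine (((hasDerivAt_cubic (1 / 2)).comp_of_eq 0 hline (by norm_num)).sub
      (hQ.comp_of_eq 0 hline (by norm_num))).congr_deriv ?_
    norm_num
    ring
  have ho' : (fun ε => cubic (1 / 2 + ε / 2) - Q (1 / 2 + ε / 2)) =o[𝓝[>] (0 : ℝ)] fun ε => ε := by
    refine (isLittleO_pi.1 ho true).congr' ?_ EventuallyEq.rfl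
    filter_upwards [Ioo_mem_nhdsGT one_pos] with ε hε
    have hx : 1 / 2 + ε / 2 ∈ Icc (0 : ℝ) 1 := ⟨by linarith [hε.1], by linarith [hε.2]⟩
    have hμ : bernoulliDist (1 / 2) + ε • (unitMass true - bernoulliDist (1 / 2))
        = bernoulliDist (1 / 2 + ε / 2) := by
      funext b
      cases b <;> simp [bernoulliDist, unitMass] <;> ring
    rw [hμ, Pi.sub_apply, tsum_apply (summable_smul_sampleExp hν hν0 hg (isDist_bernoulliDist hx))]
    rfl
  have hD2 : D = 2 := by linarith [hdiff.eq_zero_of_isLittleO_nhdsGT ho']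
  rw [hν1] at hD
  linarith

/-- Proposition: the minimum number of simulations can exceed the minimum
GGT weight. There exist a finite nonempty action set `A`, a dependence function
`F : Δ(A) → Δ(A)` differentiable on `Δ(A)`, a policy `π₀ ∈ Δ(A)`, a GGT weight `ρ > 0` with
`ρ ∈ ℕ`, and a transformation function `τ : A → Δ(A)` realising the GGT expansion of `F`
at `π₀`, such that no random number of samples `N` with `E[N] ≤ ρ` admits functions
`g_N : A^N → Δ(A)` forming a local approximation of `F` at `π₀`. -/
theorem stmt13 :
    ∃ (A : Type) (i1 : Fintype A) (i2 : DecidableEq A) (_ : Nonempty A),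
      @Stmt13Body A i1 i2 := by
  have hπ₀ : IsDist (bernoulliDist (1 / 2)) := isDist_bernoulliDist (by norm_num)
  refine ⟨Bool, inferInstance, inferInstance, ⟨true⟩, cubicMap, bernoulliDist (1 / 2), 2, unitMass,
    fun _ => isDist_cubicMap, hπ₀, two_pos, ⟨2, Nat.cast_ofNat⟩, isDist_unitMass,
    fun π _ => exists_isLittleO_cubicMap_segment π, isLittleO_cubicMap_toward_unitMass, ?_⟩
  rintro ⟨ν, hν0, hν1, hνm, hmean, g, hg, happrox⟩
  obtain ⟨g', hg', hg'g⟩ := exists_isDist_smul_sampleExp_eq hg hπ₀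
  refine not_isLittleO_cubicMap_sub_scheme hν0 hν1 hνm hmean hg' ?_
  simpa only [hg'g] using happrox _ (isDist_unitMass true)
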